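/- Let X be a Banach space such that for some a > 0 and every τ ∈ (0,1] there exists a 2-equivalent norm ‖·‖_τ with modulus of convexity δ_{‖·‖_τ}(τ) ≥ aτ². Using the universal fact that t ↦ t^{−2}δ_N(t) is equivalent to a nondecreasing function with universal constant b, there exists a single 2-equivalent norm |||·||| on X with δ_{|||·|||}(t) ≥ ab·t² for all t ∈ (0,1]. The norm may be taken as |||x||| = limₙ sup{‖x‖_{1/m} : m ≥ n}. -/
import Mathlib


open MeasureTheory Filter Set Metric
open scoped Pointwise ENNReal

noncomputable section

section Defs

variable (X : Type*) [NormedAddCommGroup X] [NormedSpace ℝ X]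

/-- The Rademacher functions on `[0,1]`. -/
def rademacher (k : ℕ) (t : ℝ) : ℝ := if Int.fract (2 ^ k * t) < 1 / 2 then 1 else -1

variable {X}

/-- The `L¹` Rademacher average `∫₀¹ ‖∑ₖ rₖ(t) xₖ‖ dt` of a finite sequence. -/
def radAvg {n : ℕ} (x : Fin n → X) : ℝ :=
  ∫ t in Icc (0 : ℝ) 1, ‖∑ k : Fin n, rademacher (k : ℕ) t • x k‖

variable (X)

/-- `N` is a norm on `X`. -/
structure IsNormOn (N : X → ℝ) : Prop where
  add_le : ∀ x y, N (x + y) ≤ N x + N y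
  smul_eq : ∀ (c : ℝ) (x : X), N (c • x) = |c| * N x
  eq_zero : ∀ x, N x = 0 → x = 0

variable {X}

/-- `N` is `γ`-equivalent to the original norm. -/
def EquivNorm (γ : ℝ) (N : X → ℝ) : Prop :=
  ∀ x, γ⁻¹ * ‖x‖ ≤ N x ∧ N x ≤ γ * ‖x‖

/-- The relative modulus of convexity `ϑ_N` (separation in the ambient norm). -/
def relConvMod (N : X → ℝ) (t : ℝ) : ℝ :=
  1 - (1 / 2) * sSup {r | ∃ x y, N x = 1 ∧ N y = 1 ∧ ‖x - y‖ > t ∧ r = N (x + y)}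

/-- The modulus of uniform convexity `δ_N`. -/
def convMod (N : X → ℝ) (t : ℝ) : ℝ :=
  1 - (1 / 2) * sSup {r | ∃ x y, N x = 1 ∧ N y = 1 ∧ N (x - y) > t ∧ r = N (x + y)}

/-- `u` converges weakly to `x`. -/
def WeakConvSeq (u : ℕ → X) (x : X) : Prop :=
  ∀ φ : X →L[ℝ] ℝ, Tendsto (fun n => φ (u n)) atTop (nhds (φ x))

/-- The relative asymptotic modulus `ϑ̄_N` (separation in the ambient norm). -/
def relAsympMod (N : X → ℝ) (t : ℝ) : ℝ :=
  1 - sSup {r | ∃ x : X, r = N x ∧ ∃ u : ℕ → X, WeakConvSeq u x ∧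
    (∀ n, N (u n) ≤ 1) ∧ sInf {d | ∃ n m : ℕ, n ≠ m ∧ d = ‖u n - u m‖} > t}

/-- `Y` is a finite-codimensional subspace. -/
def FiniteCodim (Y : Subspace ℝ X) : Prop := FiniteDimensional ℝ (X ⧸ Y)

/-- The modulus of asymptotic uniform convexity `δ̄_N`. -/
def asympConvMod (N : X → ℝ) (t : ℝ) : ℝ :=
  sInf {r | ∃ x, N x = 1 ∧ r = sSup {s | ∃ Y : Subspace ℝ X, FiniteCodim Y ∧
    s = sInf {v | ∃ y, y ∈ Y ∧ N y = 1 ∧ v = N (x + t • y) - 1}}}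

end Defs

section Aux

variable {X : Type*} [NormedAddCommGroup X] [NormedSpace ℝ X] {N : X → ℝ}

lemma IsNormOn.zero' (h : IsNormOn X N) : N 0 = 0 := by
  have := h.smul_eq 0 0
  simpa using this

lemma IsNormOn.neg' (h : IsNormOn X N) (x : X) : N (-x) = N x := by
  have := h.smul_eq (-1) x
  simpa using this

lemma IsNormOn.nonneg' (h : IsNormOn X N) (x : X) : 0 ≤ N x := by
  have h1 := h.add_le x (-x)
  rw [add_neg_cancel, h.zero', h.neg' x] at h1
  linarith

lemma IsNormOn.sub_le' (h : IsNormOn X N) (x y : X) : N (x - y) ≤ N x + N y := by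
  rw [sub_eq_add_neg]
  calc N (x + -y) ≤ N x + N (-y) := h.add_le x (-y)
    _ = N x + N y := by rw [h.neg' y]

lemma IsNormOn.le_add_sub' (h : IsNormOn X N) (u v : X) : N u ≤ N v + N (u - v) := by
  have := h.add_le v (u - v)
  simpa using this

lemma convMod_bddAbove (h : IsNormOn X N) (t : ℝ) :
    BddAbove {r | ∃ x y, N x = 1 ∧ N y = 1 ∧ N (x - y) > t ∧ r = N (x + y)} := by
  refine ⟨2, ?_⟩
  rintro r ⟨x, y, hx, hy, -, rfl⟩
  have := h.add_le x y
  rw [hx, hy] at this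
  linarith

/-- If the modulus of convexity at `t` is at least `c`, then pairs of unit vectors separated by
more than `t` have small sum. -/
lemma conv_bound (h : IsNormOn X N) {t c : ℝ} (hc : c ≤ convMod N t) {x y : X}
    (hx : N x = 1) (hy : N y = 1) (hxy : N (x - y) > t) : N (x + y) ≤ 2 - 2 * c := by
  have hmem : N (x + y) ∈ {r | ∃ x y, N x = 1 ∧ N y = 1 ∧ N (x - y) > t ∧ r = N (x + y)} :=
    ⟨x, y, hx, hy, hxy, rfl⟩
  have h1 := le_csSup (convMod_bddAbove h t) hmem
  unfold convMod at hc
  linarith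

end Aux

/-- from a family of 2-equivalent norms `‖·‖_τ` with `δ_{‖·‖_τ}(τ) ≥ aτ²`,
and Figiel's universal monotonicity of `t ↦ δ(t)/t²`, one gets a single 2-equivalent norm
with modulus of convexity `≥ ab·t²`. -/
theorem stmt13 {X : Type*} [NormedAddCommGroup X] [NormedSpace ℝ X] [CompleteSpace X]
    (a b : ℝ) (ha : 0 < a) (hb : 0 < b)
    (hfigiel : ∀ N : X → ℝ, IsNormOn X N → ∀ τ t : ℝ, 0 < τ → τ ≤ t → t ≤ 1 →
      b * (convMod N τ / τ ^ 2) ≤ convMod N t / t ^ 2)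
    (hτ : ∀ τ ∈ Ioc (0 : ℝ) 1, ∃ N : X → ℝ, IsNormOn X N ∧ EquivNorm 2 N ∧
      convMod N τ ≥ a * τ ^ 2) :
    ∃ N : X → ℝ, IsNormOn X N ∧ EquivNorm 2 N ∧
      ∀ t ∈ Ioc (0 : ℝ) 1, convMod N t ≥ a * b * t ^ 2 := by
  rcases subsingleton_or_nontrivial X with hX | hX
  · -- Degenerate case: the hypotheses are contradictory.
    exfalso
    have hN0 : IsNormOn X (fun _ : X => (0 : ℝ)) :=
      ⟨fun _ _ => by norm_num, fun c x => by norm_num, fun x _ => Subsingleton.elim x 0⟩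
    have hconv : ∀ s : ℝ, convMod (fun _ : X => (0 : ℝ)) s = 1 := by
      intro s
      have hempty : {r | ∃ x y : X, (0 : ℝ) = 1 ∧ (0 : ℝ) = 1 ∧ (0 : ℝ) > s ∧ r = 0} = ∅ := by
        ext r; simp
      unfold convMod
      rw [show {r | ∃ x y : X, (fun _ : X => (0:ℝ)) x = 1 ∧ (fun _ : X => (0:ℝ)) y = 1 ∧
          (fun _ : X => (0:ℝ)) (x - y) > s ∧ r = (fun _ : X => (0:ℝ)) (x + y)} = (∅ : Set ℝ) from
        by ext r; simp, Real.sSup_empty]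
      ring
    set τ := min 1 (Real.sqrt (b / 2)) with hτdef
    have hτ0 : 0 < τ := lt_min one_pos (Real.sqrt_pos.2 (by linarith))
    have h1 := hfigiel _ hN0 τ 1 hτ0 (min_le_left _ _) le_rfl
    rw [hconv, hconv] at h1
    have hτ2 : τ ^ 2 ≤ b / 2 := by
      have h2 : τ ≤ Real.sqrt (b / 2) := min_le_right _ _
      have h3 : Real.sqrt (b / 2) ^ 2 = b / 2 := Real.sq_sqrt (by linarith)
      nlinarith [hτ0.le]
    have hτsq : 0 < τ ^ 2 := by positivity
    have h4 : b ≤ τ ^ 2 := by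
      have h5 : b * (1 / τ ^ 2) ≤ 1 := by
        calc b * (1 / τ ^ 2) ≤ 1 / 1 ^ 2 := h1
          _ = 1 := by norm_num
      calc b = b * (1 / τ ^ 2) * τ ^ 2 := by field_simp
        _ ≤ 1 * τ ^ 2 := by nlinarith
        _ = τ ^ 2 := one_mul _
    linarith
  -- Main case: `X` is nontrivial.
  obtain ⟨x₀, hx₀⟩ := exists_ne (0 : X)
  have hx₀n : 0 < ‖x₀‖ := norm_pos_iff.2 hx₀
  -- First: `a ≤ 1` and `b ≤ 1`.
  obtain ⟨N₁, hN₁, hE₁, hc₁⟩ := hτ 1 ⟨one_pos, le_rfl⟩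
  have hN₁x₀ : 0 < N₁ x₀ := lt_of_lt_of_le (by positivity) (hE₁ x₀).1
  have ha1 : a ≤ 1 := by
    set u := (N₁ x₀)⁻¹ • x₀ with hu
    have hu1 : N₁ u = 1 := by
      rw [hu, hN₁.smul_eq, abs_of_pos (inv_pos.2 hN₁x₀), inv_mul_cancel₀ hN₁x₀.ne']
    have hmem : (0 : ℝ) ∈ {r | ∃ x y, N₁ x = 1 ∧ N₁ y = 1 ∧ N₁ (x - y) > 1 ∧ r = N₁ (x + y)} := by
      refine ⟨u, -u, hu1, by rw [hN₁.neg' u, hu1], ?_, ?_⟩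
      · rw [sub_neg_eq_add, ← two_smul ℝ u, hN₁.smul_eq, hu1]
        norm_num
      · rw [add_neg_cancel, hN₁.zero']
    have h0 := le_csSup (convMod_bddAbove hN₁ 1) hmem
    unfold convMod at hc₁
    nlinarith
  have hb1 : b ≤ 1 := by
    have hf := hfigiel N₁ hN₁ 1 1 one_pos le_rfl le_rfl
    have hc : (0 : ℝ) < convMod N₁ 1 := lt_of_lt_of_le (by nlinarith) hc₁
    rw [one_pow, div_one] at hf
    nlinarith
  -- Choose the family of norms `N m` good at `τ = (m+1)⁻¹`.
  have hτm : ∀ m : ℕ, ((m : ℝ) + 1)⁻¹ ∈ Ioc (0 : ℝ) 1 := by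
    intro m
    constructor
    · positivity
    · rw [inv_le_one_iff₀]
      right
      have : (0 : ℝ) ≤ (m : ℝ) := Nat.cast_nonneg m
      linarith
  choose N hN1 hN2 hN3 using fun m : ℕ => hτ _ (hτm m)
  -- Figiel transfer: each `N m` has good modulus on `[(m+1)⁻¹, 1]`.
  have hA : ∀ m : ℕ, ∀ t : ℝ, ((m : ℝ) + 1)⁻¹ ≤ t → t ≤ 1 → a * b * t ^ 2 ≤ convMod (N m) t := by
    intro m t h1 h2
    have hτpos : (0 : ℝ) < ((m : ℝ) + 1)⁻¹ := by positivity
    have hf := hfigiel (N m) (hN1 m) _ t hτpos h1 h2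
    have hc := hN3 m
    have ht0 : 0 < t := lt_of_lt_of_le hτpos h1
    have hτsq : (0 : ℝ) < (((m : ℝ) + 1)⁻¹) ^ 2 := by positivity
    have h3 : a ≤ convMod (N m) (((m : ℝ) + 1)⁻¹) / (((m : ℝ) + 1)⁻¹) ^ 2 :=
      (le_div_iff₀ hτsq).2 (by linarith)
    have h4 : b * a ≤ convMod (N m) t / t ^ 2 :=
      le_trans (by nlinarith) hf
    have h5 := (le_div_iff₀ (pow_pos ht0 2)).1 h4
    nlinarith
  -- Ultrafilter limit of the norms.
  set U : Ultrafilter ℕ := Ultrafilter.of atTop with hUdef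
  have hU : (U : Filter ℕ) ≤ atTop := Ultrafilter.of_le _
  have hex : ∀ x : X, ∃ c : ℝ, Tendsto (fun m => N m x) (U : Filter ℕ) (nhds c) := by
    intro x
    have hmem : ∀ m : ℕ, N m x ∈ Icc ((2 : ℝ)⁻¹ * ‖x‖) (2 * ‖x‖) :=
      fun m => ⟨(hN2 m x).1, (hN2 m x).2⟩
    obtain ⟨c, -, hc⟩ := isCompact_Icc.ultrafilter_le_nhds (U.map fun m => N m x)
      (by
        rw [Ultrafilter.coe_map, Filter.le_principal_iff]
        exact Filter.mem_map.2 (Filter.univ_mem' fun m => hmem m))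
    exact ⟨c, hc⟩
  choose M hM using hex
  have hMle : ∀ x, M x ≤ 2 * ‖x‖ := fun x => le_of_tendsto' (hM x) fun m => (hN2 m x).2
  have hMge : ∀ x, (2 : ℝ)⁻¹ * ‖x‖ ≤ M x := fun x => ge_of_tendsto' (hM x) fun m => (hN2 m x).1
  have hMnorm : IsNormOn X M := by
    refine ⟨?_, ?_, ?_⟩
    · intro x y
      exact le_of_tendsto_of_tendsto' (hM (x + y)) ((hM x).add (hM y))
        fun m => (hN1 m).add_le x y
    · intro c x
      have heq : (fun m => N m (c • x)) = fun m => |c| * N m x :=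
        funext fun m => (hN1 m).smul_eq c x
      refine tendsto_nhds_unique (hM (c • x)) ?_
      rw [heq]
      exact (hM x).const_mul |c|
    · intro x hx
      have h1 := hMge x
      rw [hx] at h1
      have h2 : ‖x‖ ≤ 0 := by linarith [norm_nonneg x]
      exact norm_le_zero_iff.1 h2
  refine ⟨M, hMnorm, fun x => ⟨hMge x, hMle x⟩, ?_⟩
  rintro t ⟨ht0, ht1⟩
  -- It suffices to bound every element of the defining set.
  have hsup : sSup {r | ∃ x y, M x = 1 ∧ M y = 1 ∧ M (x - y) > t ∧ r = M (x + y)} ≤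
      2 - 2 * (a * b * t ^ 2) := by
    apply Real.sSup_le
    · rintro r ⟨x, y, hx, hy, hxy, rfl⟩
      -- normalize in each `N m`
      have hxne : x ≠ 0 := by
        rintro rfl
        have := hMle 0
        rw [hx, norm_zero] at this
        linarith
      have hyne : y ≠ 0 := by
        rintro rfl
        have := hMle 0
        rw [hy, norm_zero] at this
        linarith
      have hxpos : ∀ m, 0 < N m x := fun m => lt_of_lt_of_le
        (mul_pos (by norm_num) (norm_pos_iff.2 hxne)) (hN2 m x).1
      have hypos : ∀ m, 0 < N m y := fun m => lt_of_lt_of_le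
        (mul_pos (by norm_num) (norm_pos_iff.2 hyne)) (hN2 m y).1
      set xv : ℕ → X := fun m => (N m x)⁻¹ • x with hxv
      set yv : ℕ → X := fun m => (N m y)⁻¹ • y with hyv
      have hxv1 : ∀ m, N m (xv m) = 1 := by
        intro m
        rw [hxv, (hN1 m).smul_eq, abs_of_pos (inv_pos.2 (hxpos m)),
          inv_mul_cancel₀ (hxpos m).ne']
      have hyv1 : ∀ m, N m (yv m) = 1 := by
        intro m
        rw [hyv, (hN1 m).smul_eq, abs_of_pos (inv_pos.2 (hypos m)),
          inv_mul_cancel₀ (hypos m).ne']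
      have herrx : ∀ m, N m (xv m - x) = |1 - N m x| := by
        intro m
        have h1 : xv m - x = ((N m x)⁻¹ - 1) • x := by rw [hxv, sub_smul, one_smul]
        rw [h1, (hN1 m).smul_eq,
          show |(N m x)⁻¹ - 1| * N m x = |((N m x)⁻¹ - 1) * N m x| from by
            rw [abs_mul, abs_of_pos (hxpos m)],
          sub_mul, inv_mul_cancel₀ (hxpos m).ne', one_mul]
      have herry : ∀ m, N m (yv m - y) = |1 - N m y| := by
        intro m
        have h1 : yv m - y = ((N m y)⁻¹ - 1) • y := by rw [hyv, sub_smul, one_smul]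
        rw [h1, (hN1 m).smul_eq,
          show |(N m y)⁻¹ - 1| * N m y = |((N m y)⁻¹ - 1) * N m y| from by
            rw [abs_mul, abs_of_pos (hypos m)],
          sub_mul, inv_mul_cancel₀ (hypos m).ne', one_mul]
      set e : ℕ → ℝ := fun m => |1 - N m x| + |1 - N m y| with he
      have hTx : Tendsto (fun m => N m x) (U : Filter ℕ) (nhds 1) := by
        have := hM x; rwa [hx] at this
      have hTy : Tendsto (fun m => N m y) (U : Filter ℕ) (nhds 1) := by
        have := hM y; rwa [hy] at this
      have hTe : Tendsto e (U : Filter ℕ) (nhds 0) := by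
        have h1 : Tendsto e (U : Filter ℕ) (nhds (|1 - 1| + |1 - 1|)) :=
          ((tendsto_const_nhds.sub hTx).abs.add (tendsto_const_nhds.sub hTy).abs)
        simpa using h1
      -- bounds for the normalized differences and sums
      have hsubdiff : ∀ m, N m ((xv m - yv m) - (x - y)) ≤ e m := by
        intro m
        have h1 : (xv m - yv m) - (x - y) = (xv m - x) - (yv m - y) := by abel
        rw [h1]
        calc N m ((xv m - x) - (yv m - y)) ≤ N m (xv m - x) + N m (yv m - y) :=
              (hN1 m).sub_le' _ _
          _ = e m := by rw [herrx m, herry m]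
      have hadddiff : ∀ m, N m ((xv m + yv m) - (x + y)) ≤ e m := by
        intro m
        have h1 : (xv m + yv m) - (x + y) = (xv m - x) + (yv m - y) := by abel
        rw [h1]
        calc N m ((xv m - x) + (yv m - y)) ≤ N m (xv m - x) + N m (yv m - y) :=
              (hN1 m).add_le _ _
          _ = e m := by rw [herrx m, herry m]
      have hglb : ∀ m, N m (x - y) - e m ≤ N m (xv m - yv m) := by
        intro m
        have h1 := (hN1 m).le_add_sub' (x - y) (xv m - yv m)
        have h2 : N m ((x - y) - (xv m - yv m)) ≤ e m := by
          have h3 : (x - y) - (xv m - yv m) = -((xv m - yv m) - (x - y)) := by abel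
          rw [h3, (hN1 m).neg']
          exact hsubdiff m
        linarith
      have hgub : ∀ m, N m (xv m - yv m) ≤ N m (x - y) + e m := by
        intro m
        have h1 := (hN1 m).le_add_sub' (xv m - yv m) (x - y)
        linarith [hsubdiff m]
      have hhlb : ∀ m, N m (x + y) - e m ≤ N m (xv m + yv m) := by
        intro m
        have h1 := (hN1 m).le_add_sub' (x + y) (xv m + yv m)
        have h2 : N m ((x + y) - (xv m + yv m)) ≤ e m := by
          have h3 : (x + y) - (xv m + yv m) = -((xv m + yv m) - (x + y)) := by abel
          rw [h3, (hN1 m).neg']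
          exact hadddiff m
        linarith
      have hhub : ∀ m, N m (xv m + yv m) ≤ N m (x + y) + e m := by
        intro m
        have h1 := (hN1 m).le_add_sub' (xv m + yv m) (x + y)
        linarith [hadddiff m]
      -- the normalized difference tends to `M (x - y)` along `U`
      have hgT : Tendsto (fun m => N m (xv m - yv m)) (U : Filter ℕ) (nhds (M (x - y))) := by
        have hlo : Tendsto (fun m => N m (x - y) - e m) (U : Filter ℕ) (nhds (M (x - y))) := by
          have := (hM (x - y)).sub hTe
          simpa using this
        have hhi : Tendsto (fun m => N m (x - y) + e m) (U : Filter ℕ) (nhds (M (x - y))) := by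
          have := (hM (x - y)).add hTe
          simpa using this
        exact tendsto_of_tendsto_of_tendsto_of_le_of_le' hlo hhi
          (Filter.Eventually.of_forall hglb) (Filter.Eventually.of_forall hgub)
      have hhT : Tendsto (fun m => N m (xv m + yv m)) (U : Filter ℕ) (nhds (M (x + y))) := by
        have hlo : Tendsto (fun m => N m (x + y) - e m) (U : Filter ℕ) (nhds (M (x + y))) := by
          have := (hM (x + y)).sub hTe
          simpa using this
        have hhi : Tendsto (fun m => N m (x + y) + e m) (U : Filter ℕ) (nhds (M (x + y))) := by
          have := (hM (x + y)).add hTe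
          simpa using this
        exact tendsto_of_tendsto_of_tendsto_of_le_of_le' hlo hhi
          (Filter.Eventually.of_forall hhlb) (Filter.Eventually.of_forall hhub)
      -- eventually the separation exceeds `t` and `(m+1)⁻¹ ≤ t`
      have hAset : ∀ᶠ m in (U : Filter ℕ), t < N m (xv m - yv m) :=
        hgT.eventually (eventually_gt_nhds hxy)
      have hBset : ∀ᶠ (m : ℕ) in (U : Filter ℕ), ((m : ℝ) + 1)⁻¹ ≤ t := by
        refine hU ?_
        refine Filter.eventually_atTop.2 ⟨⌈t⁻¹⌉₊, fun m hm => ?_⟩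
        have h1 : t⁻¹ ≤ (m : ℝ) := le_trans (Nat.le_ceil _) (by exact_mod_cast hm)
        have h2 : t⁻¹ ≤ (m : ℝ) + 1 := by linarith
        have e1 : t * t⁻¹ = 1 := mul_inv_cancel₀ ht0.ne'
        have e2 : ((m : ℝ) + 1) * ((m : ℝ) + 1)⁻¹ = 1 := by
          apply mul_inv_cancel₀; positivity
        have hm1 : (0 : ℝ) < (m : ℝ) + 1 := by positivity
        nlinarith [inv_pos.2 hm1]
      have hfin : ∀ᶠ m in (U : Filter ℕ), N m (xv m + yv m) ≤ 2 - 2 * (a * b * t ^ 2) := by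
        filter_upwards [hAset, hBset] with m h1 h2
        exact conv_bound (hN1 m) (hA m t h2 ht1) (hxv1 m) (hyv1 m) h1
      exact le_of_tendsto hhT hfin
    · have ht2 : t ^ 2 ≤ 1 := by nlinarith
      have hab : a * b ≤ 1 := by nlinarith [mul_nonneg (sub_nonneg.2 ha1) hb.le]
      have habt : a * b * t ^ 2 ≤ 1 := by
        nlinarith [mul_nonneg (mul_pos ha hb).le (sub_nonneg.2 ht2)]
      linarith
  unfold convMod
  linarith
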